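/- The process (X_n) has α-regularly varying tails with normalising sequence 𝔞_n = n^{1/α}: for every y > 0, lim_{n→∞} n·𝔪{x ∈ [0,1] : X_0(x) > y·n^{1/α}} = y^{−α}. (Paper's Lemma 4.3.) -/

import Mathlib

/-!
Since `ψ(x) = ½·𝟙[x ∉ ⋃ I] + ½·ψ(G x)` and `G` stretches the `I_i` (of total length `λ`) and
the `J_j` (of total length `1 - λ`) affinely over `[0,1]`, the masses `m(u) = 𝔪{ψ = u}` satisfy
`m(u) ≤ λ m(2u) + (1 - λ) m(2u - 1)`. For `u ≠ 1/2` at most one of `2u, 2u - 1` lies in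
`[0,1]`, so `sup m` is contracted by `max(λ, 1 - λ) < 1` and the law of `ψ` has no atoms. Its
distribution function `F` is therefore continuous and `F ∘ ψ` is uniformly distributed on
`[0,1]`. Since `X_0 > y n^{1/α}` exactly when `F ∘ ψ < y^{-α}/n`, the tail probability equals
`y^{-α}/n` as soon as `n > y^{-α}`.
-/

open Set MeasureTheory Filter
open scoped ENNReal Topology Classical

/-- The setup of Section 2 of the paper: a full-branched Markov linear map `G` on `[0,1]`
with branch domains `I_1,…,I_{k_I}` (mapped affinely onto `[0,1]`) and complementary
intervals `J_j` (mapped affinely onto `(0,1)`), all of length at most `1/2`. -/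
structure CantorData where
  kI : ℕ
  hkI : 1 ≤ kI
  a : ℕ → ℝ
  ha_lt : ∀ i, i + 1 < 2 * kI → a i < a (i + 1)
  ha0 : 0 ≤ a 0
  ha1 : a (2 * kI - 1) ≤ 1
  G : ℝ → ℝ
  hGmaps : Set.MapsTo G (Set.Icc 0 1) (Set.Icc 0 1)
  hGI : ∀ i < kI, ∃ s c : ℝ,
    |s| * (a (2 * i + 1) - a (2 * i)) = 1 ∧
    (∀ x ∈ Set.Icc (a (2 * i)) (a (2 * i + 1)), G x = s * x + c) ∧
    Set.BijOn G (Set.Icc (a (2 * i)) (a (2 * i + 1))) (Set.Icc 0 1)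
  hGJmid : ∀ i, i + 1 < kI → ∃ s c : ℝ,
    |s| * (a (2 * i + 2) - a (2 * i + 1)) = 1 ∧
    (∀ x ∈ Set.Ioo (a (2 * i + 1)) (a (2 * i + 2)), G x = s * x + c) ∧
    Set.SurjOn G (Set.Ioo (a (2 * i + 1)) (a (2 * i + 2))) (Set.Ioo 0 1)
  hGJleft : 0 < a 0 → ∃ s c : ℝ,
    |s| * a 0 = 1 ∧
    (∀ x ∈ Set.Ico 0 (a 0), G x = s * x + c) ∧
    Set.SurjOn G (Set.Ico 0 (a 0)) (Set.Ioo 0 1)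
  hGJright : a (2 * kI - 1) < 1 → ∃ s c : ℝ,
    |s| * (1 - a (2 * kI - 1)) = 1 ∧
    (∀ x ∈ Set.Ioc (a (2 * kI - 1)) 1, G x = s * x + c) ∧
    Set.SurjOn G (Set.Ioc (a (2 * kI - 1)) 1) (Set.Ioo 0 1)
  hIlen : ∀ i < kI, a (2 * i + 1) - a (2 * i) ≤ 1 / 2
  hJlenL : a 0 ≤ 1 / 2
  hJlenR : 1 - a (2 * kI - 1) ≤ 1 / 2
  hJlenM : ∀ i, i + 1 < kI → a (2 * i + 2) - a (2 * i + 1) ≤ 1 / 2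
  hkJ : (Set.Icc (0:ℝ) 1 \ ⋃ i ∈ Finset.range kI,
      Set.Icc (a (2 * i)) (a (2 * i + 1))).Nonempty

namespace CantorData

variable (S : CantorData)

/-- The union `⋃_i I_i` of the branch domains forming the Cantor construction. -/
def IU : Set ℝ := ⋃ i ∈ Finset.range S.kI, Set.Icc (S.a (2 * i)) (S.a (2 * i + 1))

/-- `Λ_n = {x ∈ [0,1] : G^{i-1}(x) ∈ ⋃ I for all 1 ≤ i ≤ n}`. -/
def Lam (n : ℕ) : Set ℝ := {x ∈ Set.Icc (0:ℝ) 1 | ∀ i < n, S.G^[i] x ∈ S.IU}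

/-- The dynamically defined Cantor set `Λ = ⋂_n Λ_n`. -/
def Cantor : Set ℝ := ⋂ n : ℕ, S.Lam n

/-- `λ = |⋃ I_i| = Σ_i 1/m_i`. -/
noncomputable def lam : ℝ := ∑ i ∈ Finset.range S.kI, (S.a (2 * i + 1) - S.a (2 * i))

/-- `𝔪`, Lebesgue measure on `[0,1]`. -/
noncomputable def mes (_S : CantorData) : Measure ℝ := volume.restrict (Set.Icc 0 1)

/-- `ψ(x) = Σ_{i ∈ 𝓘_x} 2^{-i}` where `𝓘_x = {i ≥ 1 : G^{i-1}(x) ∉ ⋃ I}`. -/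
noncomputable def psi (x : ℝ) : ℝ :=
  ∑' i : ℕ, if S.G^[i] x ∈ S.IU then 0 else (2:ℝ)⁻¹ ^ (i + 1)

/-- `F(t) = 𝔪{x : ψ(x) ≤ t}`, the distribution function of `ψ`. -/
noncomputable def F (t : ℝ) : ℝ := (S.mes {x | S.psi x ≤ t}).toReal

/-- `φ_α = (F ∘ ψ)^{-1/α}`, with value `∞` where `F ∘ ψ` vanishes. -/
noncomputable def phi (α : ℝ) (x : ℝ) : ℝ≥0∞ :=
  ENNReal.ofReal (S.F (S.psi x)) ^ (-(1 / α))

/-- `X_n = φ_α ∘ G^n`. -/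
noncomputable def X (α : ℝ) (n : ℕ) (x : ℝ) : ℝ≥0∞ := S.phi α (S.G^[n] x)

/-- `P_n`: the points following the Cantor construction exactly `n` steps and
never entering `⋃ I` afterwards. -/
def Pset (n : ℕ) : Set ℝ :=
  {x ∈ Set.Icc (0:ℝ) 1 | (∀ i < n, S.G^[i] x ∈ S.IU) ∧ ∀ i, n ≤ i → S.G^[i] x ∉ S.IU}

/-- The family of partition intervals `(I,J)_1,…,(I,J)_{k_I+k_J}`. -/
def PieceFamily : Set (Set ℝ) :=
  ((fun i => Set.Icc (S.a (2 * i)) (S.a (2 * i + 1))) '' Set.Iio S.kI) ∪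
  ((fun i => Set.Ioo (S.a (2 * i + 1)) (S.a (2 * i + 2))) '' {i | i + 1 < S.kI}) ∪
  {Set.Ico (0:ℝ) (S.a 0), Set.Ioc (S.a (2 * S.kI - 1)) 1}

/-- The depth-`d` cylinder `C_w = ⋂_{k=1}^d G^{-(k-1)}((I,J)_{w_k})`. -/
def Cyl (d : ℕ) (w : ℕ → Set ℝ) : Set ℝ := ⋂ k ∈ Finset.range d, (S.G^[k]) ⁻¹' (w k)

/-- `C` is a depth-`d` cylinder. -/
def IsCylinder (d : ℕ) (C : Set ℝ) : Prop :=
  ∃ w : ℕ → Set ℝ, (∀ k < d, w k ∈ S.PieceFamily) ∧ C = S.Cyl d w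

/-- `Υ⁺(A,d)`: union of the depth-`d` cylinders meeting `A`. -/
def upApprox (A : Set ℝ) (d : ℕ) : Set ℝ :=
  ⋃₀ {C | S.IsCylinder d C ∧ (C ∩ A).Nonempty}

/-- `Υ⁻(A,d)`: union of the depth-`d` cylinders contained in `A`. -/
def lowApprox (A : Set ℝ) (d : ℕ) : Set ℝ :=
  ⋃₀ {C | S.IsCylinder d C ∧ C ⊆ A}

/-- `u_n(τ) = (n/τ)^{1/α}`. -/
noncomputable def un (_S : CantorData) (α τ : ℝ) (n : ℕ) : ℝ := ((n : ℝ) / τ) ^ (1 / α)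

/-- `U_n(τ) = {X_0 > u_n(τ)}`. -/
noncomputable def Un (α τ : ℝ) (n : ℕ) : Set ℝ :=
  {x ∈ Set.Icc (0:ℝ) 1 | ENNReal.ofReal (S.un α τ n) < S.X α 0 x}

/-- `U_n^{(1)}(τ) = U_n(τ) ∩ G^{-1}([0,1] ∖ U_n(τ))`. -/
noncomputable def Un1 (α τ : ℝ) (n : ℕ) : Set ℝ :=
  S.Un α τ n ∩ S.G ⁻¹' (Set.Icc 0 1 \ S.Un α τ n)

/-- `U_n(τ',τ'') = U_n(τ') ∖ U_n(τ'')`. -/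
noncomputable def UnPair (α τ' τ'' : ℝ) (n : ℕ) : Set ℝ := S.Un α τ' n \ S.Un α τ'' n

/-- `U_n(τ',τ'')^{(1)}`. -/
noncomputable def UnPair1 (α τ' τ'' : ℝ) (n : ℕ) : Set ℝ :=
  S.UnPair α τ' τ'' n ∩ S.G ⁻¹' (Set.Icc 0 1 \ S.UnPair α τ' τ'' n)

/-- `j_{n,τ}`: the least `j` with `λ^j ≤ τ/n`. -/
noncomputable def jn (τ : ℝ) (n : ℕ) : ℕ := sInf {j : ℕ | S.lam ^ j ≤ τ / n}

/-- `Γ_n^+`: outer approximation of `U_n(τ',τ'')^{(1)}` by depth-`2 j_{n,τ'}` cylinders. -/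
noncomputable def GammaPlus (α τ' τ'' : ℝ) (n : ℕ) : Set ℝ :=
  S.upApprox (S.UnPair1 α τ' τ'' n) (2 * S.jn τ' n)

/-- `Γ_n^-`: inner approximation of `U_n(τ',τ'')^{(1)}` by depth-`2 j_{n,τ'}` cylinders. -/
noncomputable def GammaMinus (α τ' τ'' : ℝ) (n : ℕ) : Set ℝ :=
  S.lowApprox (S.UnPair1 α τ' τ'' n) (2 * S.jn τ' n)

end CantorData

open ProbabilityTheory

namespace ProbabilityTheory

variable {μ : Measure ℝ} [IsProbabilityMeasure μ] [NullSingletonClass μ]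

theorem continuous_cdf : Continuous (cdf μ) := by
  refine continuous_iff_continuousAt.2 fun x => ?_
  have hjump : ENNReal.ofReal (cdf μ x - Function.leftLim (cdf μ) x) = 0 := by
    rw [← StieltjesFunction.measure_singleton, measure_cdf, measure_singleton]
  rw [ENNReal.ofReal_eq_zero] at hjump
  rw [(cdf μ).mono.continuousAt_iff_leftLim_eq_rightLim, StieltjesFunction.rightLim_eq]
  linarith [(cdf μ).mono.leftLim_le (le_refl x)]

theorem measure_cdf_lt {s : ℝ} (hs : s ∈ Ioo 0 1) :
    μ {t | cdf μ t < s} = ENNReal.ofReal s := by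
  set A := {t | s ≤ cdf μ t}
  have hA_closed : IsClosed A := isClosed_le continuous_const continuous_cdf
  have hA_ne : A.Nonempty :=
    ((tendsto_cdf_atTop (μ := μ)).eventually (eventually_ge_nhds hs.2)).exists
  have hA_bdd : BddBelow A := by
    obtain ⟨b, hb⟩ := eventually_atBot.1
      ((tendsto_cdf_atBot (μ := μ)).eventually (eventually_lt_nhds hs.1))
    exact ⟨b, fun t ht => le_of_not_gt fun htb => (hb t htb.le).not_ge ht⟩
  set t₀ := sInf A
  have ht₀ : s ≤ cdf μ t₀ := hA_closed.csInf_mem hA_ne hA_bdd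
  have hlt : {t | cdf μ t < s} = Iio t₀ := by
    ext t
    simp only [mem_ofPred_eq, mem_Iio]
    constructor
    · intro h; by_contra! h'; exact (ht₀.trans ((cdf μ).mono h')).not_gt h
    · intro h; by_contra! h'; exact (csInf_le hA_bdd h').not_gt h
  have ht₀' : cdf μ t₀ ≤ s :=
    le_of_tendsto (continuous_cdf.continuousWithinAt (s := Iio t₀) (x := t₀))
      (eventually_nhdsWithin_of_forall fun t ht =>
        (show t ∈ {t | cdf μ t < s} from hlt ▸ ht).le)
  rw [hlt, measure_congr Iio_ae_eq_Iic, ← ofReal_cdf, le_antisymm ht₀' ht₀]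

end ProbabilityTheory

theorem ENNReal.eq_zero_of_le_mul_of_lt_one {x c : ℝ≥0∞} (hc : c < 1) (hx : x ≠ ∞)
    (h : x ≤ c * x) : x = 0 := by
  by_contra h0
  exact (h.trans_lt (by simpa using ENNReal.mul_lt_mul_left h0 hx hc)).false

theorem eq_zero_of_le_mul_two_add_mul_two_sub_one {m : ℝ → ℝ≥0∞} {a b C : ℝ≥0∞} (ha : a < 1)
    (hb : b < 1) (hC : C ≠ ∞) (hmC : ∀ u, m u ≤ C) (hm : ∀ u ∉ Icc (0 : ℝ) 1, m u = 0)
    (hrec : ∀ u, m u ≤ a * m (2 * u) + b * m (2 * u - 1)) (u : ℝ) : m u = 0 := by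
  have hm0 : m 0 = 0 := by
    refine ENNReal.eq_zero_of_le_mul_of_lt_one ha ((hmC 0).trans_lt hC.lt_top).ne ?_
    simpa [hm (-1) (by norm_num)] using hrec 0
  have hm1 : m 1 = 0 := by
    refine ENNReal.eq_zero_of_le_mul_of_lt_one hb ((hmC 1).trans_lt hC.lt_top).ne ?_
    have := hrec 1
    norm_num [hm 2 (by norm_num)] at this
    exact this
  set κ := ⨆ u, m u
  have hκ : κ ≠ ∞ := ((iSup_le hmC).trans_lt hC.lt_top).ne
  have hcontr : κ ≤ max a b * κ := by
    refine iSup_le fun u => (hrec u).trans ?_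
    rcases lt_trichotomy u (1 / 2) with hu | rfl | hu
    · rw [hm (2 * u - 1) fun h => by linarith [h.1], mul_zero, add_zero]
      exact mul_le_mul' (le_max_left a b) (le_iSup m _)
    · norm_num [hm0, hm1]
    · rw [hm (2 * u) fun h => by linarith [h.2], mul_zero, zero_add]
      exact mul_le_mul' (le_max_right a b) (le_iSup m _)
  have hκ0 := ENNReal.eq_zero_of_le_mul_of_lt_one (max_lt ha hb) hκ hcontr
  exact le_antisymm ((le_iSup m u).trans_eq hκ0) bot_le

theorem volume_inter_preimage_le_of_eqOn_affine {P A : Set ℝ} {f : ℝ → ℝ} {s c L : ℝ}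
    (hsL : |s| * L = 1) (hf : EqOn f (fun x => s * x + c) P) :
    volume (P ∩ f ⁻¹' A) ≤ ENNReal.ofReal L * volume A := by
  have hs : s ≠ 0 := by rintro rfl; simp at hsL
  have hL : L = |s⁻¹| := by rw [abs_inv]; field_simp; linarith
  calc volume (P ∩ f ⁻¹' A) ≤ volume ((s * ·) ⁻¹' ((· + c) ⁻¹' A)) :=
        measure_mono fun x hx => by simpa [hf hx.1] using hx.2
    _ = ENNReal.ofReal L * volume A := by
        rw [Real.volume_preimage_mul_left hs, measure_preimage_add_right, hL]

theorem MeasurableSet.inter_preimage_of_eqOn_affine {P A : Set ℝ} {f : ℝ → ℝ} {s c : ℝ}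
    (hP : MeasurableSet P) (hA : MeasurableSet A) (hf : EqOn f (fun x => s * x + c) P) :
    MeasurableSet (P ∩ f ⁻¹' A) := by
  rw [hf.inter_preimage_eq]
  exact hP.inter (((measurable_id.const_mul s).add_const c) hA)

theorem ENNReal.ofReal_lt_ofReal_rpow_neg_one_div_iff {u r α : ℝ} (hu : 0 < u) (hr : 0 ≤ r)
    (hα : 0 < α) : ENNReal.ofReal u < ENNReal.ofReal r ^ (-(1 / α)) ↔ r < u ^ (-α) := by
  rcases hr.eq_or_lt with rfl | hr
  · simp [ENNReal.zero_rpow_of_neg (neg_neg_of_pos (inv_pos.2 hα)), Real.rpow_pos_of_pos hu]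
  rw [ENNReal.ofReal_rpow_of_pos hr, ENNReal.ofReal_lt_ofReal_iff (Real.rpow_pos_of_pos hr _),
    one_div, ← inv_neg, Real.lt_rpow_inv_iff_of_neg hu hr (neg_neg_of_pos hα)]

theorem Finset.sum_range_succ_sub_add_sum_range_sub (a : ℕ → ℝ) (K : ℕ) :
    ∑ i ∈ Finset.range (K + 1), (a (2 * i + 1) - a (2 * i)) +
      ∑ i ∈ Finset.range K, (a (2 * i + 2) - a (2 * i + 1)) = a (2 * K + 1) - a 0 := by
  have htel := Finset.sum_range_sub (fun i => a (2 * i)) K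
  simp only [mul_add, mul_one, mul_zero] at htel
  rw [Finset.sum_range_succ, add_right_comm, ← Finset.sum_add_distrib]
  simp only [sub_add_sub_cancel']
  linarith

theorem ite_zero_two_inv_pow_le (P : Prop) (i : ℕ) :
    (if P then (0 : ℝ) else 2⁻¹ ^ (i + 1)) ≤ 1 / 2 / 2 ^ i := by
  split_ifs <;> simp [pow_succ, div_eq_mul_inv, mul_comm]

theorem summable_ite_zero_two_inv_pow (p : ℕ → Prop) :
    Summable fun i => if p i then (0 : ℝ) else 2⁻¹ ^ (i + 1) :=
  (summable_geometric_two' 1).of_nonneg_of_le (fun i => by split_ifs <;> positivity)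
    fun i => ite_zero_two_inv_pow_le _ i

theorem tsum_ite_zero_two_inv_pow_mem_Icc (p : ℕ → Prop) :
    ∑' i, (if p i then (0 : ℝ) else 2⁻¹ ^ (i + 1)) ∈ Icc 0 1 :=
  ⟨tsum_nonneg fun i => by split_ifs <;> positivity,
    ((summable_ite_zero_two_inv_pow p).tsum_le_tsum (fun i => ite_zero_two_inv_pow_le _ i)
      (summable_geometric_two' 1)).trans_eq (tsum_geometric_two' 1)⟩

namespace CantorData

variable (S : CantorData)

theorem mem_IU {x : ℝ} :
    x ∈ S.IU ↔ ∃ i < S.kI, x ∈ Icc (S.a (2 * i)) (S.a (2 * i + 1)) := by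
  simp only [IU, mem_iUnion₂, Finset.mem_range, exists_prop]

def JU : Set ℝ :=
  Ico 0 (S.a 0) ∪ (⋃ i ∈ Finset.range (S.kI - 1), Ioo (S.a (2 * i + 1)) (S.a (2 * i + 2))) ∪
    Ioc (S.a (2 * S.kI - 1)) 1

theorem Icc_subset_IU_union_JU : Icc (0 : ℝ) 1 ⊆ S.IU ∪ S.JU := by
  intro x hx
  by_cases hIU : x ∈ S.IU
  · exact Or.inl hIU
  right
  rcases lt_or_ge x (S.a 0) with hx0 | hx0
  · exact Or.inl (Or.inl ⟨hx.1, hx0⟩)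
  set i := Nat.findGreatest (fun i => S.a (2 * i) ≤ x) (S.kI - 1)
  have hai : S.a (2 * i) ≤ x := Nat.findGreatest_spec (P := fun i => S.a (2 * i) ≤ x)
    (Nat.zero_le _) (by simpa using hx0)
  have hik : i ≤ S.kI - 1 := Nat.findGreatest_le _
  have hxi : S.a (2 * i + 1) < x :=
    not_le.1 fun h => hIU (S.mem_IU.2 ⟨i, by have := S.hkI; omega, hai, h⟩)
  rcases hik.lt_or_eq with hik | hik
  · refine Or.inl (Or.inr (mem_iUnion₂.2 ⟨i, Finset.mem_range.2 hik, hxi, ?_⟩))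
    exact not_le.1 (Nat.findGreatest_is_greatest (P := fun i => S.a (2 * i) ≤ x)
      (Nat.lt_succ_self i) (by omega))
  · refine Or.inr ⟨?_, hx.2⟩
    rwa [show 2 * S.kI - 1 = 2 * i + 1 by have := S.hkI; omega]

theorem a_zero_add_sum_add_one_sub :
    S.a 0 + ∑ i ∈ Finset.range (S.kI - 1), (S.a (2 * i + 2) - S.a (2 * i + 1)) +
      (1 - S.a (2 * S.kI - 1)) = 1 - S.lam := by
  obtain ⟨K, hK⟩ : ∃ K, S.kI = K + 1 := ⟨S.kI - 1, by have := S.hkI; omega⟩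
  have := Finset.sum_range_succ_sub_add_sum_range_sub S.a K
  rw [lam, hK, show 2 * (K + 1) - 1 = 2 * K + 1 by omega, Nat.add_sub_cancel]
  linarith

theorem length_I_pos {i : ℕ} (hi : i ∈ Finset.range S.kI) :
    0 < S.a (2 * i + 1) - S.a (2 * i) :=
  sub_pos.2 (S.ha_lt (2 * i) (by rw [Finset.mem_range] at hi; omega))

theorem length_J_pos {i : ℕ} (hi : i ∈ Finset.range (S.kI - 1)) :
    0 < S.a (2 * i + 2) - S.a (2 * i + 1) :=
  sub_pos.2 (S.ha_lt (2 * i + 1) (by rw [Finset.mem_range] at hi; omega))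

theorem sum_length_J_nonneg :
    0 ≤ ∑ i ∈ Finset.range (S.kI - 1), (S.a (2 * i + 2) - S.a (2 * i + 1)) :=
  Finset.sum_nonneg fun _ hi => (S.length_J_pos hi).le

theorem lam_pos : 0 < S.lam :=
  Finset.sum_pos (fun _ hi => S.length_I_pos hi)
    (Finset.nonempty_range_iff.2 (by have := S.hkI; omega))

theorem lam_lt_one : S.lam < 1 := by
  rw [← sub_pos, ← S.a_zero_add_sum_add_one_sub]
  obtain ⟨x, hx, hxI⟩ := S.hkJ
  have hJ := S.sum_length_J_nonneg
  rcases (S.Icc_subset_IU_union_JU hx).resolve_left hxI with (h | h) | h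
  · linarith [h.1, h.2, S.ha1]
  · obtain ⟨i, hi, hxi⟩ := mem_iUnion₂.1 h
    have := Finset.single_le_sum (fun _ hj => (S.length_J_pos hj).le) hi
    linarith [hxi.1, hxi.2, S.ha0, S.ha1]
  · linarith [h.1, h.2, S.ha0]

theorem volume_IU_inter_preimage_le (A : Set ℝ) :
    volume (S.IU ∩ S.G ⁻¹' A) ≤ ENNReal.ofReal S.lam * volume A := by
  rw [IU, iUnion₂_inter, lam, ENNReal.ofReal_sum_of_nonneg fun _ hi => (S.length_I_pos hi).le,
    Finset.sum_mul]
  refine (measure_biUnion_finset_le _ _).trans (Finset.sum_le_sum fun i hi => ?_)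
  obtain ⟨s, c, hs, hG, -⟩ := S.hGI i (Finset.mem_range.1 hi)
  exact volume_inter_preimage_le_of_eqOn_affine hs hG

theorem measurableSet_IU_inter_preimage {A : Set ℝ} (hA : MeasurableSet A) :
    MeasurableSet (S.IU ∩ S.G ⁻¹' A) := by
  rw [IU, iUnion₂_inter]
  refine Finset.measurableSet_biUnion _ fun i hi => ?_
  obtain ⟨s, c, -, hG, -⟩ := S.hGI i (Finset.mem_range.1 hi)
  exact measurableSet_Icc.inter_preimage_of_eqOn_affine hA hG

theorem volume_JU_inter_preimage_le (A : Set ℝ) :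
    volume (S.JU ∩ S.G ⁻¹' A) ≤ ENNReal.ofReal (1 - S.lam) * volume A := by
  have hL : volume (Ico 0 (S.a 0) ∩ S.G ⁻¹' A) ≤ ENNReal.ofReal (S.a 0) * volume A := by
    rcases S.ha0.eq_or_lt with h | h
    · simp [← h]
    · obtain ⟨s, c, hs, hG, -⟩ := S.hGJleft h
      exact volume_inter_preimage_le_of_eqOn_affine hs hG
  have hM : volume (⋃ i ∈ Finset.range (S.kI - 1),
      Ioo (S.a (2 * i + 1)) (S.a (2 * i + 2)) ∩ S.G ⁻¹' A) ≤
      ENNReal.ofReal (∑ i ∈ Finset.range (S.kI - 1), (S.a (2 * i + 2) - S.a (2 * i + 1))) *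
        volume A := by
    rw [ENNReal.ofReal_sum_of_nonneg fun _ hi => (S.length_J_pos hi).le, Finset.sum_mul]
    refine (measure_biUnion_finset_le _ _).trans (Finset.sum_le_sum fun i hi => ?_)
    obtain ⟨s, c, hs, hG, -⟩ := S.hGJmid i (by rw [Finset.mem_range] at hi; omega)
    exact volume_inter_preimage_le_of_eqOn_affine hs hG
  have hR : volume (Ioc (S.a (2 * S.kI - 1)) 1 ∩ S.G ⁻¹' A) ≤
      ENNReal.ofReal (1 - S.a (2 * S.kI - 1)) * volume A := by
    rcases S.ha1.eq_or_lt with h | h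
    · simp [h]
    · obtain ⟨s, c, hs, hG, -⟩ := S.hGJright h
      exact volume_inter_preimage_le_of_eqOn_affine hs hG
  rw [JU, union_inter_distrib_right, union_inter_distrib_right, iUnion₂_inter,
    ← S.a_zero_add_sum_add_one_sub, ENNReal.ofReal_add (add_nonneg S.ha0 S.sum_length_J_nonneg)
      (sub_nonneg.2 S.ha1), ENNReal.ofReal_add S.ha0 S.sum_length_J_nonneg, add_mul, add_mul]
  exact (measure_union_le _ _).trans (add_le_add ((measure_union_le _ _).trans
    (add_le_add hL hM)) hR)

theorem measurableSet_JU_inter_preimage {A : Set ℝ} (hA : MeasurableSet A) :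
    MeasurableSet (S.JU ∩ S.G ⁻¹' A) := by
  rw [JU, union_inter_distrib_right, union_inter_distrib_right, iUnion₂_inter]
  refine MeasurableSet.union (.union ?_ (Finset.measurableSet_biUnion _ fun i hi => ?_)) ?_
  · rcases S.ha0.eq_or_lt with h | h
    · simp [← h]
    · obtain ⟨s, c, -, hG, -⟩ := S.hGJleft h
      exact measurableSet_Ico.inter_preimage_of_eqOn_affine hA hG
  · obtain ⟨s, c, -, hG, -⟩ := S.hGJmid i (by rw [Finset.mem_range] at hi; omega)
    exact measurableSet_Ioo.inter_preimage_of_eqOn_affine hA hG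
  · rcases S.ha1.eq_or_lt with h | h
    · simp [h]
    · obtain ⟨s, c, -, hG, -⟩ := S.hGJright h
      exact measurableSet_Ioc.inter_preimage_of_eqOn_affine hA hG

theorem measurableSet_Icc_inter_preimage {A : Set ℝ} (hA : MeasurableSet A) :
    MeasurableSet (Icc 0 1 ∩ S.G ⁻¹' A) := by
  rw [← inter_eq_left.2 S.Icc_subset_IU_union_JU, inter_assoc, union_inter_distrib_right]
  exact measurableSet_Icc.inter
    ((S.measurableSet_IU_inter_preimage hA).union (S.measurableSet_JU_inter_preimage hA))

theorem psi_mem_Icc (x : ℝ) : S.psi x ∈ Icc 0 1 :=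
  tsum_ite_zero_two_inv_pow_mem_Icc _

theorem psi_eq (x : ℝ) :
    S.psi x = (if x ∈ S.IU then 0 else 2⁻¹) + 2⁻¹ * S.psi (S.G x) := by
  rw [psi, (summable_ite_zero_two_inv_pow _).tsum_eq_zero_add, psi, ← tsum_mul_left]
  congr 1
  · simp
  · refine tsum_congr fun i => ?_
    rw [Function.iterate_succ_apply]
    split_ifs <;> ring

theorem measurableSet_Icc_inter_preimage_iterate_IU (i : ℕ) :
    MeasurableSet (Icc 0 1 ∩ S.G^[i] ⁻¹' S.IU) := by
  induction i with
  | zero =>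
    exact measurableSet_Icc.inter (Finset.measurableSet_biUnion _ fun _ _ => measurableSet_Icc)
  | succ i ih =>
    convert S.measurableSet_Icc_inter_preimage ih using 1
    ext x
    simp only [mem_inter_iff, mem_preimage, Function.iterate_succ_apply]
    exact ⟨fun h => ⟨h.1, S.hGmaps h.1, h.2⟩, fun h => ⟨h.1, h.2.2⟩⟩

theorem aemeasurable_psi : AEMeasurable S.psi S.mes := by
  have hterm (i : ℕ) :
      AEMeasurable (fun x => if S.G^[i] x ∈ S.IU then (0 : ℝ) else 2⁻¹ ^ (i + 1)) S.mes := by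
    have hM : Measurable fun x =>
        if x ∈ Icc 0 1 ∩ S.G^[i] ⁻¹' S.IU then (0 : ℝ) else 2⁻¹ ^ (i + 1) :=
      Measurable.ite (S.measurableSet_Icc_inter_preimage_iterate_IU i) measurable_const
        measurable_const
    refine hM.aemeasurable.congr ?_
    filter_upwards [ae_restrict_mem measurableSet_Icc] with x hx
    simp [hx]
  exact aemeasurable_of_tendsto_metrizable_ae'
    (fun n => Finset.aemeasurable_fun_sum (Finset.range n) fun i _ => hterm i)
    (ae_of_all _ fun x => (summable_ite_zero_two_inv_pow _).hasSum.tendsto_sum_nat)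

instance : IsProbabilityMeasure S.mes := ⟨by simp [mes]⟩

theorem mes_psi_eq_le (u : ℝ) :
    S.mes {x | S.psi x = u} ≤ ENNReal.ofReal S.lam * S.mes {x | S.psi x = 2 * u} +
      ENNReal.ofReal (1 - S.lam) * S.mes {x | S.psi x = 2 * u - 1} := by
  simp only [mes, Measure.restrict_apply' measurableSet_Icc]
  refine (measure_mono fun x hx => ?_).trans ((measure_union_le _ _).trans
    (add_le_add (S.volume_IU_inter_preimage_le _) (S.volume_JU_inter_preimage_le _)))
  obtain ⟨hxu : S.psi x = u, hx⟩ := hx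
  have hGx := S.hGmaps hx
  have hrec := S.psi_eq x
  by_cases hI : x ∈ S.IU
  · rw [if_pos hI] at hrec
    exact Or.inl ⟨hI, (by linarith : S.psi (S.G x) = 2 * u), hGx⟩
  · rw [if_neg hI] at hrec
    exact Or.inr ⟨(S.Icc_subset_IU_union_JU hx).resolve_left hI,
      (by linarith : S.psi (S.G x) = 2 * u - 1), hGx⟩

theorem mes_psi_eq (u : ℝ) : S.mes {x | S.psi x = u} = 0 :=
  eq_zero_of_le_mul_two_add_mul_two_sub_one (m := fun u => S.mes {x | S.psi x = u})
    (ENNReal.ofReal_lt_one.2 S.lam_lt_one) (ENNReal.ofReal_lt_one.2 (by linarith [S.lam_pos]))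
    ENNReal.one_ne_top (fun _ => prob_le_one)
    (fun u hu => by
      convert measure_empty (μ := S.mes)
      exact eq_empty_of_forall_notMem fun x (hx : S.psi x = u) => hu (hx ▸ S.psi_mem_Icc x))
    S.mes_psi_eq_le u

instance : IsProbabilityMeasure (S.mes.map S.psi) :=
  Measure.isProbabilityMeasure_map S.aemeasurable_psi

instance : NullSingletonClass (S.mes.map S.psi) :=
  ⟨fun u => by
    rw [Measure.map_apply_of_aemeasurable S.aemeasurable_psi (measurableSet_singleton u)]
    exact S.mes_psi_eq u⟩

theorem F_eq_cdf (t : ℝ) : S.F t = cdf (S.mes.map S.psi) t := by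
  rw [cdf_eq_real, measureReal_def,
    Measure.map_apply_of_aemeasurable S.aemeasurable_psi measurableSet_Iic]
  rfl

theorem mes_F_psi_lt {s : ℝ} (hs : s ∈ Ioo 0 1) :
    S.mes {x | S.F (S.psi x) < s} = ENNReal.ofReal s := by
  rw [← measure_cdf_lt (μ := S.mes.map S.psi) hs,
    Measure.map_apply_of_aemeasurable S.aemeasurable_psi
      (measurableSet_lt (cdf _).mono.measurable measurable_const)]
  simp only [F_eq_cdf]
  rfl

end CantorData

/-- `(X_n)` has `α`-regularly varying tails with `𝔞_n = n^{1/α}`: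
for every `y > 0`, `n · 𝔪{X_0 > y n^{1/α}} → y^{-α}`. -/
theorem alpha_regularly_varying_tails (S : CantorData) (α : ℝ)
    (hα : α ∈ Set.Ioo (0:ℝ) 2) (y : ℝ) (hy : 0 < y) :
    Filter.Tendsto
      (fun n : ℕ => (n : ℝ) *
        (S.mes {x | ENNReal.ofReal (y * (n : ℝ) ^ (1 / α)) < S.X α 0 x}).toReal)
      Filter.atTop (𝓝 (y ^ (-α))) := by
  set c := y ^ (-α)
  have hc : 0 < c := Real.rpow_pos_of_pos hy _
  refine tendsto_const_nhds.congr' ?_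
  filter_upwards [eventually_gt_atTop ⌈c⌉₊] with n hn
  have hn : c < n := Nat.lt_of_ceil_lt hn
  have hnpos : (0 : ℝ) < n := hc.trans hn
  have hs : c / n ∈ Ioo 0 1 := ⟨div_pos hc hnpos, (div_lt_one hnpos).2 hn⟩
  have hu : 0 < y * (n : ℝ) ^ (1 / α) := by positivity
  have hpow : (y * (n : ℝ) ^ (1 / α)) ^ (-α) = c / n := by
    rw [Real.mul_rpow hy.le (by positivity), ← Real.rpow_mul hnpos.le,
      show 1 / α * -α = -1 by field_simp [hα.1.ne'], Real.rpow_neg_one, div_eq_mul_inv]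
  have hset : {x | ENNReal.ofReal (y * (n : ℝ) ^ (1 / α)) < S.X α 0 x} =
      {x | S.F (S.psi x) < c / n} := by
    ext x
    rw [mem_ofPred_eq, CantorData.X, CantorData.phi, Function.iterate_zero_apply,
      ENNReal.ofReal_lt_ofReal_rpow_neg_one_div_iff hu
      (show 0 ≤ S.F (S.psi x) from ENNReal.toReal_nonneg) hα.1, hpow]
    rfl
  rw [hset, S.mes_F_psi_lt hs, ENNReal.toReal_ofReal hs.1.le]
  field_simp
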